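/- Let n ≥ 3 and m ≥ 1 be integers. Then C(m+n-1, n-1)·C(m+n-2, n-2) − C(m+n-2, n-1)·C(m+n-1, n-2) = (1/((n-1)!·(n-2)!)) · (m+1) · (m+n-1) · ∏_{ι=2}^{n-2} (m+ι)², where C(a,b) denotes the binomial coefficient. -/

import Mathlib

/-!
Each binomial is a rising product over a factorial. With `Q = (m+2)⋯(m+n-2)` the four entries are
`(m+1)Q(m+n-1)/(n-1)!`, `(m+1)Q/(n-2)!`, `m(m+1)Q/(n-1)!` and `Q(m+n-1)/(n-2)!`, so the determinant
is `(m+1)(m+n-1)Q² ((m+1) - m) / ((n-1)!(n-2)!)`.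
-/

open Finset Nat

lemma cast_choose_eq_ascFactorial_div (a j N : ℕ) (h : a + j = N + 1) :
    (N.choose j : ℚ) = a.ascFactorial j / j ! := by
  rw [ascFactorial_eq_factorial_mul_choose', show a + j - 1 = N by omega, cast_mul]
  field_simp

lemma ascFactorial_succ_eq_mul_ascFactorial (n k : ℕ) :
    n.ascFactorial (k + 1) = n * (n + 1).ascFactorial k := by
  rw [add_comm k, ← ascFactorial_mul_ascFactorial, ascFactorial_succ, ascFactorial_zero, mul_one,
    add_zero]

lemma prod_Ico_add_eq_ascFactorial (m a b : ℕ) :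
    ∏ i ∈ Ico a b, (m + i) = (m + a).ascFactorial (b - a) := by
  rw [prod_Ico_eq_prod_range, ascFactorial_eq_prod_range]
  simp only [add_assoc]

theorem cast_choose_det_eq (m k : ℕ) :
    ((m + k + 2).choose (k + 2) : ℚ) * (m + k + 1).choose (k + 1)
        - (m + k + 1).choose (k + 2) * (m + k + 2).choose (k + 1)
      = (m + 1) * (m + k + 2) * ((m + 2).ascFactorial k : ℚ) ^ 2 / ((k + 2)! * (k + 1)!) := by
  rw [cast_choose_eq_ascFactorial_div (m + 1) (k + 2) (m + k + 2) (by omega),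
    cast_choose_eq_ascFactorial_div (m + 1) (k + 1) (m + k + 1) (by omega),
    cast_choose_eq_ascFactorial_div m (k + 2) (m + k + 1) (by omega),
    cast_choose_eq_ascFactorial_div (m + 2) (k + 1) (m + k + 2) (by omega),
    ascFactorial_succ_eq_mul_ascFactorial (m + 1), ascFactorial_succ_eq_mul_ascFactorial m,
    ascFactorial_succ_eq_mul_ascFactorial (m + 1), ascFactorial_succ]
  push_cast
  field_simp
  ring

theorem det_binomials_eq_polynomial (n m : ℕ) (hn : 3 ≤ n) :
    ((m + n - 1).choose (n - 1) : ℚ) * ((m + n - 2).choose (n - 2) : ℚ)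
        - ((m + n - 2).choose (n - 1) : ℚ) * ((m + n - 1).choose (n - 2) : ℚ)
      = (1 / ((Nat.factorial (n - 1) : ℚ) * (Nat.factorial (n - 2) : ℚ)))
          * (m + 1) * (m + n - 1) * ∏ ι ∈ Finset.Icc 2 (n - 2), ((m : ℚ) + ι) ^ 2 := by
  obtain ⟨k, rfl⟩ : ∃ k, n = k + 3 := ⟨n - 3, by omega⟩
  have hprod : ∏ ι ∈ Icc 2 (k + 1), ((m : ℚ) + ι) ^ 2 = ((m + 2).ascFactorial k : ℚ) ^ 2 := by
    have h := prod_Ico_add_eq_ascFactorial m 2 (k + 2)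
    rw [Nat.add_sub_cancel] at h
    rw [prod_pow, ← Ico_add_one_right_eq_Icc, ← h]
    push_cast
    rfl
  rw [show m + (k + 3) - 1 = m + k + 2 by omega, show m + (k + 3) - 2 = m + k + 1 by omega,
    show k + 3 - 1 = k + 2 by omega, show k + 3 - 2 = k + 1 by omega, hprod, cast_choose_det_eq]
  push_cast
  ring
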